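/- arXiv:2003.00134 — 2 statements merged into one kernel-verified Lean document; each statement's English description precedes it below -/
import Mathlib

section
/- For one-dimensional probability measures with finite p-th moments, the Wasserstein-p distance equals the L^p distance between their quantile functions: W_p(P, Q)^p = ∫_0^1 |F_P^{-1}(t) − F_Q^{-1}(t)|^p dt, where F^{-1} denotes the generalized inverse (quantile function) of the CDF. -/
open MeasureTheory

/-- Cumulative distribution function of a measure on `ℝ`. -/
noncomputable def cdf (P : Measure ℝ) (x : ℝ) : ℝ := (P (Set.Iic x)).toReal

/-- Quantile function (generalized inverse of the CDF). -/
noncomputable def quantile (P : Measure ℝ) (t : ℝ) : ℝ :=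
  sInf {x : ℝ | t ≤ cdf P x}

/-- `p`-th power of the Wasserstein-`p` distance on `ℝ`, via couplings. -/
noncomputable def WpPow (p : ℝ) (P Q : Measure ℝ) : ℝ :=
  sInf {c | ∃ γ : Measure (ℝ × ℝ),
    γ.map Prod.fst = P ∧ γ.map Prod.snd = Q ∧ c = ∫ q, |q.1 - q.2| ^ p ∂γ}

/-!
The quantile coupling, the image of Lebesgue measure on `(0, 1)` under `u ↦ (F_P⁻¹ u, F_Q⁻¹ u)`,
has marginals `P` and `Q`, so `W_p(P, Q)^p` is at most the right-hand side. For the converse,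
`|x - y|^p = ∫_0^∞ p (p - 1) r^(p - 2) (|x - y| - r)⁺ dr` (for `p = 1` take `r = 0` alone), and
`(|x - y| - r)⁺` is the length of the set of `s` with `min x y ≤ s` and `s + r < max x y`. So it
suffices to compare the masses of the sets `{(x, y) | min x y ≤ s, t < max x y}`, `s ≤ t`: any
coupling gives such a set mass at least `(F_Q s - F_P t)⁺ + (F_P s - F_Q t)⁺`, and the quantile
coupling attains this bound.
-/

open Set Filter

section Quantile

variable {P : Measure ℝ}

lemma ofReal_cdf [IsFiniteMeasure P] (x : ℝ) : ENNReal.ofReal (cdf P x) = P (Iic x) :=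
  ENNReal.ofReal_toReal (measure_ne_top P _)

lemma cdf_nonneg (x : ℝ) : 0 ≤ cdf P x := ENNReal.toReal_nonneg

variable [IsProbabilityMeasure P]

lemma cdf_eq_probabilityTheory_cdf (x : ℝ) : cdf P x = ProbabilityTheory.cdf P x :=
  (ProbabilityTheory.cdf_eq_real P x).symm

lemma cdf_le_one (x : ℝ) : cdf P x ≤ 1 := by
  rw [cdf_eq_probabilityTheory_cdf]; exact ProbabilityTheory.cdf_le_one P x

lemma quantile_le_iff {t x : ℝ} (ht : t ∈ Ioo 0 1) : quantile P t ≤ x ↔ t ≤ cdf P x := by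
  set F := ProbabilityTheory.cdf P
  simp only [quantile, cdf_eq_probabilityTheory_cdf]
  have hne : {z | t ≤ F z}.Nonempty :=
    ((ProbabilityTheory.tendsto_cdf_atTop P).eventually_const_le ht.2).exists
  have hbdd : BddBelow {z | t ≤ F z} := by
    obtain ⟨b, hb⟩ := ((ProbabilityTheory.tendsto_cdf_atBot P).eventually_lt_const ht.1).exists
    exact ⟨b, fun z hz => not_lt.1 fun hzb => (hz.trans (F.mono hzb.le)).not_gt hb⟩
  refine ⟨fun h => ?_, fun h => csInf_le hbdd h⟩
  -- right continuity of the cdf closes the gap between `quantile P t ≤ x` and `t ≤ F x`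
  refine ge_of_tendsto ((F.right_continuous x).tendsto.mono_left
    (nhdsWithin_mono _ Ioi_subset_Ici_self)) ?_
  filter_upwards [self_mem_nhdsWithin] with z hz
  obtain ⟨w, hw, hwz⟩ := exists_lt_of_csInf_lt hne (h.trans_lt hz)
  exact hw.trans (F.mono hwz.le)

lemma monotoneOn_quantile : MonotoneOn (quantile P) (Ioo 0 1) := fun _ hu _ hv huv =>
  (quantile_le_iff hu).2 (huv.trans ((quantile_le_iff hv).1 le_rfl))

lemma aemeasurable_quantile : AEMeasurable (quantile P) (volume.restrict (Ioo 0 1)) :=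
  aemeasurable_restrict_of_monotoneOn measurableSet_Ioo monotoneOn_quantile

lemma map_quantile : (volume.restrict (Ioo 0 1)).map (quantile P) = P := by
  refine Measure.ext_of_Iic _ _ fun x => ?_
  rw [Measure.map_apply_of_aemeasurable aemeasurable_quantile measurableSet_Iic,
    Measure.restrict_apply' measurableSet_Ioo, ← ofReal_cdf]
  have : quantile P ⁻¹' Iic x ∩ Ioo 0 1 = Ioo 0 1 ∩ Iic (cdf P x) := by
    ext u
    simp only [mem_inter_iff, mem_preimage, mem_Iic]
    exact ⟨fun h => ⟨h.2, (quantile_le_iff h.2).1 h.1⟩, fun h => ⟨(quantile_le_iff h.1).2 h.2, h.1⟩⟩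
  rw [this, measure_congr ((Ioo_ae_eq_Ioc (μ := volume)).inter (ae_eq_refl (Iic (cdf P x)))),
    Ioc_inter_Iic, min_eq_right (cdf_le_one x), Real.volume_Ioc, sub_zero]

end Quantile

noncomputable def quantileCoupling (P Q : Measure ℝ) : Measure (ℝ × ℝ) :=
  (volume.restrict (Ioo 0 1)).map fun u => (quantile P u, quantile Q u)

section QuantileCoupling

variable {P Q : Measure ℝ} [IsProbabilityMeasure P] [IsProbabilityMeasure Q]

lemma aemeasurable_quantile_prod :
    AEMeasurable (fun u => (quantile P u, quantile Q u)) (volume.restrict (Ioo 0 1)) :=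
  aemeasurable_quantile.prodMk aemeasurable_quantile

lemma quantileCoupling_map_fst : (quantileCoupling P Q).map Prod.fst = P := by
  rw [quantileCoupling, AEMeasurable.map_map_of_aemeasurable measurable_fst.aemeasurable
    aemeasurable_quantile_prod]
  exact map_quantile

lemma quantileCoupling_map_snd : (quantileCoupling P Q).map Prod.snd = Q := by
  rw [quantileCoupling, AEMeasurable.map_map_of_aemeasurable measurable_snd.aemeasurable
    aemeasurable_quantile_prod]
  exact map_quantile

instance : IsProbabilityMeasure (quantileCoupling P Q) :=
  (Measure.isProbabilityMeasure_map_iff (μ := quantileCoupling P Q)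
    measurable_fst.aemeasurable).1 (by rw [quantileCoupling_map_fst]; infer_instance)

lemma integral_quantileCoupling {f : ℝ × ℝ → ℝ} (hf : Measurable f) :
    ∫ q, f q ∂quantileCoupling P Q = ∫ u in Ioo 0 1, f (quantile P u, quantile Q u) :=
  integral_map aemeasurable_quantile_prod hf.aestronglyMeasurable

lemma volume_quantile_le_not_le (s t : ℝ) :
    volume.restrict (Ioo 0 1) {u | quantile Q u ≤ s ∧ ¬quantile P u ≤ t}
      ≤ Q (Iic s) - P (Iic t) := by
  rw [Measure.restrict_apply' measurableSet_Ioo, ← ofReal_cdf, ← ofReal_cdf,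
    ← ENNReal.ofReal_sub _ (cdf_nonneg t), ← Real.volume_Ioc]
  refine measure_mono fun u ⟨⟨hQ, hP⟩, hu⟩ => ⟨?_, (quantile_le_iff hu).1 hQ⟩
  exact not_le.1 fun h => hP ((quantile_le_iff hu).2 h)

end QuantileCoupling

def straddle (s t : ℝ) : Set (ℝ × ℝ) := {q | min q.1 q.2 ≤ s ∧ t < max q.1 q.2}

lemma straddle_eq_union (s t : ℝ) :
    straddle s t = (Prod.snd ⁻¹' Iic s \ Prod.fst ⁻¹' Iic t) ∪
      (Prod.fst ⁻¹' Iic s \ Prod.snd ⁻¹' Iic t) := by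
  ext ⟨x, y⟩
  simp only [straddle, mem_union, Set.mem_sdiff, mem_preimage, mem_Iic, not_le]
  rcases le_total x y with h | h
  · simp only [mem_ofPred_eq, min_eq_left h, max_eq_right h]
    exact ⟨Or.inr, by rintro (⟨hy, hx⟩ | h'); exacts [⟨h.trans hy, hx.trans_le h⟩, h']⟩
  · simp only [mem_ofPred_eq, min_eq_right h, max_eq_left h]
    exact ⟨Or.inl, by rintro (h' | ⟨hx, hy⟩); exacts [h', ⟨h.trans hx, hy.trans_le h⟩]⟩

lemma measurableSet_straddle (s t : ℝ) : MeasurableSet (straddle s t) :=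
  (measurableSet_le (measurable_fst.min measurable_snd) measurable_const).inter
    (measurableSet_lt measurable_const (measurable_fst.max measurable_snd))

lemma measure_straddle_ge (γ : Measure (ℝ × ℝ)) {s t : ℝ} (hst : s ≤ t) :
    (γ.map Prod.snd (Iic s) - γ.map Prod.fst (Iic t)) +
      (γ.map Prod.fst (Iic s) - γ.map Prod.snd (Iic t)) ≤ γ (straddle s t) := by
  simp only [Measure.map_apply measurable_fst measurableSet_Iic,
    Measure.map_apply measurable_snd measurableSet_Iic]
  rw [straddle_eq_union, measure_union _ ((measurableSet_Iic.preimage measurable_fst).diff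
    (measurableSet_Iic.preimage measurable_snd))]
  · exact add_le_add le_measure_sdiff le_measure_sdiff
  · rw [disjoint_left]
    rintro q ⟨-, hq⟩ ⟨hq', -⟩
    exact hq (le_trans hq' hst)

lemma quantileCoupling_straddle_le (P Q : Measure ℝ) [IsProbabilityMeasure P]
    [IsProbabilityMeasure Q] (s t : ℝ) :
    quantileCoupling P Q (straddle s t) ≤ (Q (Iic s) - P (Iic t)) + (P (Iic s) - Q (Iic t)) := by
  rw [straddle_eq_union]
  refine (measure_union_le _ _).trans (add_le_add ?_ ?_) <;>
    rw [quantileCoupling, Measure.map_apply_of_aemeasurable aemeasurable_quantile_prod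
      ((measurableSet_Iic.preimage (by fun_prop)).diff (measurableSet_Iic.preimage (by fun_prop)))]
  · exact volume_quantile_le_not_le s t
  · exact volume_quantile_le_not_le s t

lemma quantileCoupling_straddle_le_measure_straddle {P Q : Measure ℝ} [IsProbabilityMeasure P]
    [IsProbabilityMeasure Q] {γ : Measure (ℝ × ℝ)} (hγP : γ.map Prod.fst = P)
    (hγQ : γ.map Prod.snd = Q) {s t : ℝ} (hst : s ≤ t) :
    quantileCoupling P Q (straddle s t) ≤ γ (straddle s t) := by
  subst hγP hγQ
  exact (quantileCoupling_straddle_le _ _ s t).trans (measure_straddle_ge γ hst)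

lemma volume_setOf_mem_straddle (q : ℝ × ℝ) (r : ℝ) :
    volume {s | q ∈ straddle s (s + r)} = ENNReal.ofReal (|q.1 - q.2| - r) := by
  have : {s | q ∈ straddle s (s + r)} = Ico (min q.1 q.2) (max q.1 q.2 - r) := by
    ext s
    simp only [straddle, mem_ofPred_eq, mem_Ico, lt_sub_iff_add_lt]
  rw [this, Real.volume_Ico, sub_right_comm, max_sub_min_eq_abs']

lemma lintegral_ofReal_abs_sub_sub (γ : Measure (ℝ × ℝ)) [SFinite γ] (r : ℝ) :
    ∫⁻ q, ENNReal.ofReal (|q.1 - q.2| - r) ∂γ = ∫⁻ s, γ (straddle s (s + r)) := by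
  set S : Set ((ℝ × ℝ) × ℝ) := {z | z.1 ∈ straddle z.2 (z.2 + r)}
  have hS : MeasurableSet S :=
    (measurableSet_le (f := fun z : (ℝ × ℝ) × ℝ => min z.1.1 z.1.2) (by fun_prop)
      measurable_snd).inter
      (measurableSet_lt (g := fun z : (ℝ × ℝ) × ℝ => max z.1.1 z.1.2) (by fun_prop) (by fun_prop))
  calc ∫⁻ q, ENNReal.ofReal (|q.1 - q.2| - r) ∂γ
      = ∫⁻ q, (∫⁻ s, S.indicator 1 (q, s)) ∂γ := by
        refine lintegral_congr fun q => ?_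
        rw [← volume_setOf_mem_straddle]
        exact (lintegral_indicator_one (hS.preimage measurable_prodMk_left)).symm
    _ = ∫⁻ s, ∫⁻ q, S.indicator 1 (q, s) ∂γ :=
        lintegral_lintegral_swap (by exact (measurable_one.indicator hS).aemeasurable)
    _ = ∫⁻ s, γ (straddle s (s + r)) := by
        refine lintegral_congr fun s => ?_
        rw [← lintegral_indicator_one (measurableSet_straddle s (s + r))]
        rfl

lemma lintegral_ofReal_abs_sub_sub_quantileCoupling_le {P Q : Measure ℝ} [IsProbabilityMeasure P]
    [IsProbabilityMeasure Q] {γ : Measure (ℝ × ℝ)} [SFinite γ] (hγP : γ.map Prod.fst = P)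
    (hγQ : γ.map Prod.snd = Q) {r : ℝ} (hr : 0 ≤ r) :
    ∫⁻ q, ENNReal.ofReal (|q.1 - q.2| - r) ∂quantileCoupling P Q
      ≤ ∫⁻ q, ENNReal.ofReal (|q.1 - q.2| - r) ∂γ := by
  rw [lintegral_ofReal_abs_sub_sub, lintegral_ofReal_abs_sub_sub]
  exact lintegral_mono fun s =>
    quantileCoupling_straddle_le_measure_straddle hγP hγQ (le_add_of_nonneg_right hr)

lemma lintegral_Ioo_ofReal_deriv {g g' : ℝ → ℝ} {a b : ℝ} (hab : a ≤ b)
    (hcont : ContinuousOn g (Icc a b)) (hderiv : ∀ x ∈ Ioo a b, HasDerivAt g (g' x) x)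
    (hg' : ∀ x ∈ Ioo a b, 0 ≤ g' x) :
    ∫⁻ x in Ioo a b, ENNReal.ofReal (g' x) = ENNReal.ofReal (g b - g a) := by
  have hint : IntegrableOn g' (Ioc a b) :=
    intervalIntegral.integrableOn_deriv_of_nonneg hcont hderiv hg'
  rw [← ofReal_integral_eq_lintegral_ofReal (hint.mono_set Ioo_subset_Ioc_self)
    ((ae_restrict_iff' measurableSet_Ioo).2 (Eventually.of_forall hg')),
    ← integral_Ioc_eq_integral_Ioo, ← intervalIntegral.integral_of_le hab,
    intervalIntegral.integral_eq_sub_of_hasDerivAt_of_le hab hcont hderiv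
      ((intervalIntegrable_iff_integrableOn_Ioc_of_le hab).2 hint)]

lemma lintegral_mul_ofReal_sub_eq_rpow {p u : ℝ} (hp : 1 < p) (hu : 0 ≤ u) :
    ∫⁻ r in Ioi 0, ENNReal.ofReal (p * (p - 1) * r ^ (p - 2)) * ENNReal.ofReal (u - r)
      = ENNReal.ofReal (u ^ p) := by
  have hsupp : ∀ r ∈ Ioi (0 : ℝ),
      ENNReal.ofReal (p * (p - 1) * r ^ (p - 2)) * ENNReal.ofReal (u - r)
      = (Ioo 0 u).indicator (fun r => ENNReal.ofReal (p * (p - 1) * r ^ (p - 2) * (u - r))) r := by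
    intro r hr
    by_cases hru : r < u
    · rw [indicator_of_mem (show r ∈ Ioo 0 u from ⟨hr, hru⟩), ENNReal.ofReal_mul
        (mul_nonneg (by nlinarith) (Real.rpow_nonneg (le_of_lt hr) _))]
    · rw [indicator_of_notMem fun h => hru h.2,
        ENNReal.ofReal_of_nonpos (sub_nonpos.2 (not_lt.1 hru)), mul_zero]
  -- `p r^(p-1) (u - r) + r^p` is an antiderivative of the integrand on `[0, u]`
  have hcont : Continuous fun r : ℝ => p * r ^ (p - 1) * (u - r) + r ^ p := by
    have := Real.continuous_rpow_const (q := p - 1) (by linarith)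
    have := Real.continuous_rpow_const (q := p) (by linarith)
    fun_prop
  have hderiv : ∀ r ∈ Ioo 0 u, HasDerivAt (fun r : ℝ => p * r ^ (p - 1) * (u - r) + r ^ p)
      (p * (p - 1) * r ^ (p - 2) * (u - r)) r := by
    intro r hr
    have hpow := fun q : ℝ => Real.hasDerivAt_rpow_const (p := q) (Or.inl hr.1.ne')
    refine ((((hpow (p - 1)).const_mul p).mul ((hasDerivAt_const r u).sub (hasDerivAt_id r))).add
      (hpow p)).congr_deriv ?_
    rw [show p - 1 - 1 = p - 2 by ring, Pi.sub_apply, id]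
    ring
  rw [setLIntegral_congr_fun measurableSet_Ioi hsupp, lintegral_indicator measurableSet_Ioo,
    Measure.restrict_restrict measurableSet_Ioo, inter_eq_left.2 Ioo_subset_Ioi_self,
    lintegral_Ioo_ofReal_deriv hu hcont.continuousOn hderiv]
  · rw [Real.zero_rpow (by linarith), Real.zero_rpow (by linarith)]
    ring_nf
  · intro r hr
    exact mul_nonneg (mul_nonneg (by nlinarith) (Real.rpow_nonneg hr.1.le _)) (by linarith [hr.2])

lemma lintegral_rpow_le_of_lintegral_sub_le {α : Type*} [MeasurableSpace α] {μ ν : Measure α}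
    [SFinite μ] [SFinite ν] {f : α → ℝ} (hf : Measurable f) (hf0 : ∀ a, 0 ≤ f a) {p : ℝ}
    (hp : 1 ≤ p)
    (h : ∀ r, 0 ≤ r → ∫⁻ a, ENNReal.ofReal (f a - r) ∂μ ≤ ∫⁻ a, ENNReal.ofReal (f a - r) ∂ν) :
    ∫⁻ a, ENNReal.ofReal (f a ^ p) ∂μ ≤ ∫⁻ a, ENNReal.ofReal (f a ^ p) ∂ν := by
  rcases hp.eq_or_lt with rfl | hp
  · simpa using h 0 le_rfl
  have hrepr : ∀ μ : Measure α, [SFinite μ] → ∫⁻ a, ENNReal.ofReal (f a ^ p) ∂μ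
      = ∫⁻ r in Ioi 0, ENNReal.ofReal (p * (p - 1) * r ^ (p - 2)) *
          ∫⁻ a, ENNReal.ofReal (f a - r) ∂μ := by
    intro μ _
    simp_rw [← lintegral_mul_ofReal_sub_eq_rpow hp (hf0 _),
      ← lintegral_const_mul' _ _ ENNReal.ofReal_ne_top]
    exact lintegral_lintegral_swap (by fun_prop)
  rw [hrepr μ, hrepr ν]
  exact setLIntegral_mono' measurableSet_Ioi fun r hr => mul_le_mul_right (h r (le_of_lt hr)) _

lemma integrable_rpow_abs_sub {p : ℝ} (hp : 0 < p) {γ : Measure (ℝ × ℝ)}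
    (hfst : Integrable (fun x => |x| ^ p) (γ.map Prod.fst))
    (hsnd : Integrable (fun x => |x| ^ p) (γ.map Prod.snd)) :
    Integrable (fun q => |q.1 - q.2| ^ p) γ := by
  have hp' : ENNReal.ofReal p ≠ 0 := by simpa using hp
  have hmemLp : ∀ μ : Measure ℝ, Integrable (fun x => |x| ^ p) μ →
      MemLp id (ENNReal.ofReal p) μ := fun μ h =>
    (integrable_norm_rpow_iff aestronglyMeasurable_id hp' ENNReal.ofReal_ne_top).1
      (by simpa [ENNReal.toReal_ofReal hp.le] using h)
  have hsub := ((hmemLp _ hfst).comp_of_map measurable_fst.aemeasurable).sub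
    ((hmemLp _ hsnd).comp_of_map measurable_snd.aemeasurable)
  simpa [ENNReal.toReal_ofReal hp.le] using hsub.integrable_norm_rpow hp' ENNReal.ofReal_ne_top

lemma integral_quantileCoupling_le {p : ℝ} (hp : 1 ≤ p) {P Q : Measure ℝ}
    [IsProbabilityMeasure P] [IsProbabilityMeasure Q] {γ : Measure (ℝ × ℝ)}
    (hγP : γ.map Prod.fst = P) (hγQ : γ.map Prod.snd = Q)
    (hγ : Integrable (fun q => |q.1 - q.2| ^ p) γ) :
    ∫ q, |q.1 - q.2| ^ p ∂quantileCoupling P Q ≤ ∫ q, |q.1 - q.2| ^ p ∂γ := by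
  have : IsProbabilityMeasure γ :=
    (Measure.isProbabilityMeasure_map_iff measurable_fst.aemeasurable).1 (hγP ▸ inferInstance)
  have hcost_nonneg : ∀ μ : Measure (ℝ × ℝ), 0 ≤ᵐ[μ] fun q => |q.1 - q.2| ^ p :=
    fun _ => Eventually.of_forall fun q => Real.rpow_nonneg (abs_nonneg _) p
  have hcost : Measurable fun q : ℝ × ℝ => |q.1 - q.2| ^ p := by fun_prop
  rw [integral_eq_lintegral_of_nonneg_ae (hcost_nonneg _) hcost.aestronglyMeasurable,
    integral_eq_lintegral_of_nonneg_ae (hcost_nonneg _) hcost.aestronglyMeasurable]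
  exact ENNReal.toReal_mono hγ.lintegral_lt_top.ne
    (lintegral_rpow_le_of_lintegral_sub_le (f := fun q : ℝ × ℝ => |q.1 - q.2|) (by fun_prop)
      (fun q => abs_nonneg _) hp fun r hr =>
        lintegral_ofReal_abs_sub_sub_quantileCoupling_le hγP hγQ hr)

/-- for one-dimensional measures with finite `p`-th moments,
`W_p(P,Q)^p` equals the `L^p` distance between the quantile functions. -/
theorem WpPow_eq_quantile_integral (p : ℝ) (hp : 1 ≤ p) (P Q : Measure ℝ)
    (hP : IsProbabilityMeasure P) (hQ : IsProbabilityMeasure Q)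
    (hPi : Integrable (fun x => |x| ^ p) P) (hQi : Integrable (fun x => |x| ^ p) Q) :
    WpPow p P Q = ∫ t in Set.Ioo (0 : ℝ) 1, |quantile P t - quantile Q t| ^ p := by
  have hcost : Measurable fun q : ℝ × ℝ => |q.1 - q.2| ^ p := by fun_prop
  refine IsLeast.csInf_eq ⟨⟨quantileCoupling P Q, quantileCoupling_map_fst,
    quantileCoupling_map_snd, (integral_quantileCoupling hcost).symm⟩, ?_⟩
  rintro c ⟨γ, hγP, hγQ, rfl⟩
  rw [← integral_quantileCoupling hcost]
  exact integral_quantileCoupling_le hp hγP hγQ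
    (integrable_rpow_abs_sub (by linarith) (hγP ▸ hPi) (hγQ ▸ hQi))
end

section
/- If b is the sorted (nondecreasing) rearrangement of a real sequence, then for any other sequence c and any convex cost, the monotone matching minimizes total cost: for sorted sequences a_1 ≤ ... ≤ a_N and z_1 ≤ ... ≤ z_N, and any permutation σ, Σ_i |a_i − z_i|^p ≤ Σ_i |a_i − z_{σ(i)}|^p for all p ≥ 1. -/
/-!
A convex cost `c` has increasing differences, so `C i k = c (a i - z k)` satisfies the Monge
(quadrangle) inequality `C i k + C j l ≤ C i l + C j k` for `i ≤ j`, `k ≤ l` whenever `a` and `z`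
are monotone. For such a cost matrix, let `x` be the least point moved by `σ`: composing `σ` with
the transposition of `x` and `σ x` makes `x` a fixed point and only exchanges the entries of the
rows `x < σ⁻¹ x` in the columns `x < σ x`, so it does not increase the total cost. Each step
fixes one more point, so iterating reaches the identity without ever increasing the cost.
-/

open Set Finset Equiv

theorem ConvexOn.map_add_sub_map_le_map_add_sub_map {𝕜 : Type*} [Field 𝕜] [LinearOrder 𝕜]
    [IsStrictOrderedRing 𝕜] {s : Set 𝕜} {f : 𝕜 → 𝕜} (hf : ConvexOn 𝕜 s f) {u v d : 𝕜}
    (hu : u ∈ s) (hvd : v + d ∈ s) (huv : u ≤ v) (hd : 0 ≤ d) :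
    f (u + d) - f u ≤ f (v + d) - f v := by
  rcases hd.eq_or_lt with rfl | hd
  · simp
  rcases huv.eq_or_lt with rfl | huv
  · rfl
  have hleft := hf.secant_mono_aux1 hu hvd (lt_add_of_pos_right u hd) (by linarith)
  have hright := hf.secant_mono_aux1 hu hvd huv (lt_add_of_pos_right v hd)
  have : (v + d - u) * (f (u + d) - f u) ≤ (v + d - u) * (f (v + d) - f v) := by linarith
  exact le_of_mul_le_mul_left this (by linarith)

theorem ConvexOn.map_sub_add_map_sub_le {c : ℝ → ℝ} (hc : ConvexOn ℝ univ c) {x x' y y' : ℝ}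
    (hx : x ≤ x') (hy : y ≤ y') : c (x - y) + c (x' - y') ≤ c (x - y') + c (x' - y) := by
  have := hc.map_add_sub_map_le_map_add_sub_map (mem_univ (x - y')) (mem_univ (x - y + (x' - x)))
    (by linarith : x - y' ≤ x - y) (sub_nonneg.2 hx)
  rw [show x - y' + (x' - x) = x' - y' by ring, show x - y + (x' - x) = x' - y by ring] at this
  linarith

theorem convexOn_abs_rpow {p : ℝ} (hp : 1 ≤ p) : ConvexOn ℝ univ fun t : ℝ ↦ |t| ^ p := by
  have himage : (abs '' univ : Set ℝ) = Set.Ici 0 :=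
    Subset.antisymm (by rintro _ ⟨t, -, rfl⟩; exact abs_nonneg t)
      fun t ht ↦ ⟨t, mem_univ t, abs_of_nonneg ht⟩
  exact (himage ▸ convexOn_rpow hp).comp convexOn_univ_norm
    (himage ▸ Real.monotoneOn_rpow_Ici_of_exponent_nonneg (zero_le_one.trans hp))

theorem Fintype.sum_le_sum_of_eq_of_ne_of_ne {ι β : Type*} [Fintype ι] [DecidableEq ι]
    [AddCommMonoid β] [PartialOrder β] [IsOrderedAddMonoid β] {f g : ι → β} {i j : ι}
    (hij : i ≠ j) (hfg : ∀ k, k ≠ i → k ≠ j → f k = g k) (hle : f i + f j ≤ g i + g j) :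
    ∑ k, f k ≤ ∑ k, g k := by
  rw [← sum_add_sum_compl {i, j} f, ← sum_add_sum_compl {i, j} g, sum_pair hij, sum_pair hij]
  refine add_le_add hle (Finset.sum_congr rfl fun k hk ↦ ?_).le
  simp only [Finset.mem_compl, Finset.mem_insert, Finset.mem_singleton, not_or] at hk
  exact hfg k hk.1 hk.2

namespace Equiv.Perm

variable {ι : Type*} [LinearOrder ι]

theorem lt_apply_of_forall_lt_apply_eq {σ : Perm ι} {x : ι} (hx : σ x ≠ x)
    (hmin : ∀ k < x, σ k = k) : x < σ x := by
  refine lt_of_le_of_ne (not_lt.1 fun hlt ↦ hx ?_) hx.symm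
  exact σ.injective (hmin _ hlt)

variable [Fintype ι] [DecidableEq ι] {β : Type*} [AddCommMonoid β] [PartialOrder β]
  [IsOrderedAddMonoid β] {C : ι → ι → β}

theorem sum_swap_mul_le (hC : ∀ ⦃i j k l⦄, i ≤ j → k ≤ l → C i k + C j l ≤ C i l + C j k)
    {σ : Perm ι} {x : ι} (hx : σ x ≠ x) (hmin : ∀ k < x, σ k = k) :
    ∑ i, C i ((swap x (σ x) * σ) i) ≤ ∑ i, C i (σ i) := by
  set j := σ⁻¹ x
  have hxσx : x < σ x := lt_apply_of_forall_lt_apply_eq hx hmin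
  have hxj : x < j := by
    refine lt_apply_of_forall_lt_apply_eq (fun h ↦ hx (inv_eq_iff_eq.1 h).symm) fun k hk ↦ ?_
    exact inv_eq_iff_eq.2 (hmin k hk).symm
  have hσj : σ j = x := σ.apply_symm_apply x
  refine Fintype.sum_le_sum_of_eq_of_ne_of_ne hxj.ne (fun k hkx hkj ↦ ?_) ?_
  · rw [mul_apply, swap_apply_of_ne_of_ne]
    · exact fun h ↦ hkj (by simp [j, ← h])
    · exact fun h ↦ hkx (σ.injective h)
  · simpa [hσj] using hC hxj.le hxσx.le

theorem sum_apply_self_le_sum_apply_perm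
    (hC : ∀ ⦃i j k l⦄, i ≤ j → k ≤ l → C i k + C j l ≤ C i l + C j k) (σ : Perm ι) :
    ∑ i, C i i ≤ ∑ i, C i (σ i) := by
  by_cases hσ : σ = 1
  · simp [hσ]
  set x := σ.support.min' (nonempty_iff_ne_empty.2 (support_eq_empty_iff.not.2 hσ))
  have hx : σ x ≠ x := mem_support.1 (min'_mem _ _)
  have hmin : ∀ k < x, σ k = k := fun k hk ↦
    notMem_support.1 fun hk' ↦ (min'_le _ _ hk').not_gt hk
  exact (sum_apply_self_le_sum_apply_perm hC _).trans (sum_swap_mul_le hC hx hmin)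
termination_by σ.support.card
decreasing_by exact card_support_swap_mul hx

end Equiv.Perm

/-- rearrangement inequality — for sorted (nondecreasing)
sequences `a` and `z` and any permutation `σ`, the monotone matching minimizes
the total cost `∑ |a i - z (σ i)|^p` for every `p ≥ 1`. -/
theorem monotone_matching_optimal (N : ℕ) (a z : Fin N → ℝ)
    (ha : Monotone a) (hz : Monotone z) (σ : Equiv.Perm (Fin N))
    (p : ℝ) (hp : 1 ≤ p) :
    ∑ i, |a i - z i| ^ p ≤ ∑ i, |a i - z (σ i)| ^ p :=
  Equiv.Perm.sum_apply_self_le_sum_apply_perm (C := fun i k ↦ |a i - z k| ^ p)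
    (fun _ _ _ _ hij hkl ↦ (convexOn_abs_rpow hp).map_sub_add_map_sub_le (ha hij) (hz hkl)) σ
end
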